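/- Let (x̄,ū) be a W^{1,1} local minimizer for (FP3). There is no subsegment [τ1,τ2] ⊆ [t0,T] with τ1 < τ2 such that −1 < x̄(t) < 1 for all t ∈ (τ1,τ2) and x̄(τ1) = x̄(τ2) = 1. -/

import Mathlib

open MeasureTheory Set

noncomputable section

/-- A feasible process for problem (FP3): `x` is the (absolutely continuous) state
trajectory, represented as the indefinite integral of its a.e. derivative `-a*u`,
`u` is a measurable control with values in `[-1,1]` a.e., the initial condition is
`x t0 = x0`, and the bilateral state constraint `-1 ≤ x t ≤ 1` holds on `[t0,T]`. -/
def FP3Feasible (a t0 T x0 : ℝ) (x u : ℝ → ℝ) : Prop :=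
  AEStronglyMeasurable u (volume.restrict (Icc t0 T)) ∧
  (∀ᵐ t ∂(volume.restrict (Icc t0 T)), u t ∈ Icc (-1 : ℝ) 1) ∧
  (∀ t ∈ Icc t0 T, x t = x0 + ∫ s in t0..t, -(a * u s)) ∧
  (∀ t ∈ Icc t0 T, x t ∈ Icc (-1 : ℝ) 1)

/-- The cost functional of (FP3) on the interval `[t1,t2]`. -/
def FP3Cost (lam t1 t2 : ℝ) (x u : ℝ → ℝ) : ℝ :=
  ∫ t in t1..t2, -(Real.exp (-(lam * t)) * (x t + u t))

/-- `(x,u)` is a `W^{1,1}` local minimizer of (FP3). -/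
def FP3LocalMin (a lam t0 T x0 : ℝ) (x u : ℝ → ℝ) : Prop :=
  FP3Feasible a t0 T x0 x u ∧
  ∃ δ > (0 : ℝ), ∀ y v, FP3Feasible a t0 T x0 y v →
    (∫ t in t0..T, |(-(a * v t)) - (-(a * u t))|) ≤ δ →
    FP3Cost lam t0 T x u ≤ FP3Cost lam t0 T y v

/-- `(x,u)` is a `W^{1,1}` global minimizer of (FP3). -/
def FP3GlobalMin (a lam t0 T x0 : ℝ) (x u : ℝ → ℝ) : Prop :=
  FP3Feasible a t0 T x0 x u ∧
  ∀ y v, FP3Feasible a t0 T x0 y v → FP3Cost lam t0 T x u ≤ FP3Cost lam t0 T y v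

/-- The function `Δ(t1,t2) = e^{-λ t1} - 2 e^{-λ (t1+t2)/2} + e^{-λ t2}`. -/
def FP3Delta (lam t1 t2 : ℝ) : ℝ :=
  Real.exp (-(lam * t1)) - 2 * Real.exp (-(lam * (t1 + t2) / 2)) + Real.exp (-(lam * t2))

/-- The characteristic constant `ρ = (1/λ) ln (a/(a-λ))` of (FP3). -/
def FP3rho (a lam : ℝ) : ℝ := (1 / lam) * Real.log (a / (a - lam))

/-!
Suppose `x̄` touches the upper bound `1` at `τ1 < τ2` and stays strictly inside in between. Around
a minimum point `s` of `x̄` on `[τ1, τ2]`, replace the control on a short window `(s - h, s + h]`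
by full-speed ascent followed by full-speed descent: the new trajectory is the tent over `x̄` that
leaves it at `s - h` and rejoins it at `s + h`. This process is feasible, `W^{1,1}`-close to
`(x̄, ū)`, lies above `x̄` and strictly above it at `s`. Integrating `e^{-λt} (v - ū)` by parts,
with `(y - x̄)' = -a (v - ū)`, shows that the cost changes by `-(1 - λ/a) ∫ e^{-λt} (y - x̄) dt`,
which is negative because `λ < a`.
-/

open Real
open scoped Interval

theorem integral_exp_mul_eq {lam p q : ℝ} {g : ℝ → ℝ} (hg : IntervalIntegrable g volume p q) :
    ∫ t in p..q, exp (-(lam * t)) * g t =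
      exp (-(lam * q)) * (∫ t in p..q, g t) +
        lam * ∫ t in p..q, exp (-(lam * t)) * ∫ s in p..t, g s := by
  have hD := hg.absolutelyContinuousOnInterval_intervalIntegral (c := p) left_mem_uIcc
  have hE : AbsolutelyContinuousOnInterval (fun t => exp (-(lam * t))) p q :=
    (by fun_prop : ContDiff ℝ 1 fun t => exp (-(lam * t))).contDiffOn.absolutelyContinuousOnInterval
  have hderivD : ∫ t in p..q, deriv (fun x => ∫ s in p..x, g s) t * exp (-(lam * t)) =
      ∫ t in p..q, exp (-(lam * t)) * g t := by
    refine intervalIntegral.integral_congr_ae ?_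
    filter_upwards [hg.ae_hasDerivAt_integral] with t ht hmem
    rw [(ht (uIoc_subset_uIcc hmem) p left_mem_uIcc).deriv, mul_comm]
  have hderivE : ∫ t in p..q, (∫ s in p..t, g s) * deriv (fun t => exp (-(lam * t))) t =
      -lam * ∫ t in p..q, exp (-(lam * t)) * ∫ s in p..t, g s := by
    rw [← intervalIntegral.integral_const_mul]
    refine intervalIntegral.integral_congr fun t _ => ?_
    have hE' : HasDerivAt (fun t => exp (-(lam * t))) (exp (-(lam * t)) * -lam) t := by
      simpa using ((hasDerivAt_id t).const_mul lam).neg.exp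
    rw [hE'.deriv]
    ring
  have hibp := hD.integral_mul_deriv_eq_deriv_mul hE
  rw [hderivD, hderivE, intervalIntegral.integral_same, zero_mul, sub_zero] at hibp
  linear_combination hibp

def fp3Trajectory (a t0 x0 : ℝ) (v : ℝ → ℝ) (t : ℝ) : ℝ := x0 + ∫ s in t0..t, -(a * v s)

def IsFP3Control (t0 T : ℝ) (v : ℝ → ℝ) : Prop :=
  AEStronglyMeasurable v (volume.restrict (Icc t0 T)) ∧
    ∀ᵐ t ∂(volume.restrict (Icc t0 T)), v t ∈ Icc (-1 : ℝ) 1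

namespace IsFP3Control

variable {a t0 T x0 c d : ℝ} {v : ℝ → ℝ}

lemma integrableOn (hv : IsFP3Control t0 T v) : IntegrableOn v (Icc t0 T) :=
  Integrable.mono' (integrable_const 1) hv.1 (hv.2.mono fun _ ht => abs_le.2 ht)

lemma ae_abs_le (hv : IsFP3Control t0 T v) (hc : c ∈ Icc t0 T) (hd : d ∈ Icc t0 T) :
    ∀ᵐ t, t ∈ Ι c d → |v t| ≤ 1 := by
  filter_upwards [(ae_restrict_iff' measurableSet_Icc).1 hv.2] with t ht hmem
  exact abs_le.2 (ht (uIcc_subset_Icc hc hd (uIoc_subset_uIcc hmem)))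

lemma intervalIntegrable (hv : IsFP3Control t0 T v) (hc : c ∈ Icc t0 T) (hd : d ∈ Icc t0 T) :
    IntervalIntegrable v volume c d :=
  (hv.integrableOn.mono_set (uIcc_subset_Icc hc hd)).intervalIntegrable

lemma intervalIntegrable_neg_mul (hv : IsFP3Control t0 T v) (hc : c ∈ Icc t0 T)
    (hd : d ∈ Icc t0 T) : IntervalIntegrable (fun t => -(a * v t)) volume c d :=
  ((hv.intervalIntegrable hc hd).const_mul a).neg

lemma abs_integral_le (hv : IsFP3Control t0 T v) (hc : c ∈ Icc t0 T) (hd : d ∈ Icc t0 T) :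
    |∫ t in c..d, -(a * v t)| ≤ |a| * |d - c| := by
  refine intervalIntegral.norm_integral_le_of_norm_le_const_ae (f := fun t => -(a * v t)) ?_
  filter_upwards [hv.ae_abs_le hc hd] with t ht hmem
  rw [Real.norm_eq_abs, abs_neg, abs_mul]
  exact mul_le_of_le_one_right (abs_nonneg a) (ht hmem)

lemma fp3Trajectory_sub (hv : IsFP3Control t0 T v) (hc : c ∈ Icc t0 T) (hd : d ∈ Icc t0 T) :
    fp3Trajectory a t0 x0 v d - fp3Trajectory a t0 x0 v c = ∫ t in c..d, -(a * v t) := by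
  have ht0 : t0 ∈ Icc t0 T := left_mem_Icc.2 (hc.1.trans hc.2)
  rw [fp3Trajectory, fp3Trajectory, add_sub_add_left_eq_sub,
    intervalIntegral.integral_interval_sub_left (hv.intervalIntegrable_neg_mul ht0 hd)
      (hv.intervalIntegrable_neg_mul ht0 hc)]

lemma continuousOn_fp3Trajectory (hv : IsFP3Control t0 T v) (htT : t0 ≤ T) :
    ContinuousOn (fp3Trajectory a t0 x0 v) (Icc t0 T) := by
  have hprim : ContinuousOn (fun t => ∫ s in t0..t, -(a * v s)) (uIcc t0 T) :=
    intervalIntegral.continuousOn_primitive_interval'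
      (hv.intervalIntegrable_neg_mul (left_mem_Icc.2 htT) (right_mem_Icc.2 htT)) left_mem_uIcc
  rw [uIcc_of_le htT] at hprim
  exact continuousOn_const.add hprim

lemma fp3Feasible (hv : IsFP3Control t0 T v)
    (hstate : ∀ t ∈ Icc t0 T, fp3Trajectory a t0 x0 v t ∈ Icc (-1 : ℝ) 1) :
    FP3Feasible a t0 T x0 (fp3Trajectory a t0 x0 v) v :=
  ⟨hv.1, hv.2, fun _ _ => rfl, hstate⟩

end IsFP3Control

namespace FP3Feasible

variable {a lam t0 T x0 c d : ℝ} {x u y v : ℝ → ℝ}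

lemma isFP3Control (h : FP3Feasible a t0 T x0 x u) : IsFP3Control t0 T u := ⟨h.1, h.2.1⟩

lemma eqOn_fp3Trajectory (h : FP3Feasible a t0 T x0 x u) :
    EqOn x (fp3Trajectory a t0 x0 u) (Icc t0 T) := h.2.2.1

lemma sub_eq_integral (h : FP3Feasible a t0 T x0 x u) (hc : c ∈ Icc t0 T) (hd : d ∈ Icc t0 T) :
    x d - x c = ∫ t in c..d, -(a * u t) := by
  rw [h.eqOn_fp3Trajectory hc, h.eqOn_fp3Trajectory hd, h.isFP3Control.fp3Trajectory_sub hc hd]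

lemma abs_sub_le (h : FP3Feasible a t0 T x0 x u) (hc : c ∈ Icc t0 T) (hd : d ∈ Icc t0 T) :
    |x d - x c| ≤ |a| * |d - c| :=
  h.sub_eq_integral hc hd ▸ h.isFP3Control.abs_integral_le hc hd

lemma le_add_mul_sub (ha : 0 ≤ a) (h : FP3Feasible a t0 T x0 x u) (hc : c ∈ Icc t0 T)
    (hd : d ∈ Icc t0 T) (hcd : c ≤ d) : x d ≤ x c + a * (d - c) ∧ x c ≤ x d + a * (d - c) := by
  have := abs_le.1 (h.abs_sub_le hc hd)
  rw [abs_of_nonneg ha, abs_of_nonneg (sub_nonneg.2 hcd)] at this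
  constructor <;> linarith

lemma mem_Icc (h : FP3Feasible a t0 T x0 x u) (hc : c ∈ Icc t0 T) : x c ∈ Icc (-1 : ℝ) 1 :=
  h.2.2.2 c hc

lemma continuousOn (h : FP3Feasible a t0 T x0 x u) : ContinuousOn x (Icc t0 T) := by
  rcases le_or_gt t0 T with htT | hTt
  · exact (h.isFP3Control.continuousOn_fp3Trajectory htT).congr h.eqOn_fp3Trajectory
  · simp [Icc_eq_empty_of_lt hTt]

lemma intervalIntegrable_exp_mul_state (h : FP3Feasible a t0 T x0 x u) (htT : t0 ≤ T) :
    IntervalIntegrable (fun t => exp (-(lam * t)) * x t) volume t0 T :=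
  (h.continuousOn.intervalIntegrable_of_Icc htT).continuousOn_mul (by fun_prop)

lemma intervalIntegrable_exp_mul_control (h : FP3Feasible a t0 T x0 x u) (htT : t0 ≤ T) :
    IntervalIntegrable (fun t => exp (-(lam * t)) * u t) volume t0 T :=
  (h.isFP3Control.intervalIntegrable (left_mem_Icc.2 htT) (right_mem_Icc.2 htT)).continuousOn_mul
    (by fun_prop)

lemma cost_eq (h : FP3Feasible a t0 T x0 x u) (htT : t0 ≤ T) :
    FP3Cost lam t0 T x u =
      -(∫ t in t0..T, exp (-(lam * t)) * x t) - ∫ t in t0..T, exp (-(lam * t)) * u t := by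
  simp only [FP3Cost, mul_add]
  rw [intervalIntegral.integral_neg, intervalIntegral.integral_add
    (h.intervalIntegrable_exp_mul_state htT) (h.intervalIntegrable_exp_mul_control htT)]
  ring

theorem cost_sub_eq (ha : a ≠ 0) (htT : t0 ≤ T) (hx : FP3Feasible a t0 T x0 x u)
    (hy : FP3Feasible a t0 T x0 y v) :
    FP3Cost lam t0 T y v - FP3Cost lam t0 T x u =
      -(1 - lam / a) * (∫ t in t0..T, exp (-(lam * t)) * (y t - x t)) +
        exp (-(lam * T)) * (y T - x T) / a := by
  have hT0 : t0 ∈ Icc t0 T := left_mem_Icc.2 htT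
  have hTT : T ∈ Icc t0 T := right_mem_Icc.2 htT
  have hprim : ∀ t ∈ uIcc t0 T, ∫ s in t0..t, (-(a * v s) - -(a * u s)) = y t - x t := by
    intro t ht
    rw [uIcc_of_le htT] at ht
    rw [intervalIntegral.integral_sub (hy.isFP3Control.intervalIntegrable_neg_mul hT0 ht)
      (hx.isFP3Control.intervalIntegrable_neg_mul hT0 ht), hx.eqOn_fp3Trajectory ht,
      hy.eqOn_fp3Trajectory ht, fp3Trajectory, fp3Trajectory]
    ring
  have hg : IntervalIntegrable (fun s => -(a * v s) - -(a * u s)) volume t0 T :=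
    (hy.isFP3Control.intervalIntegrable_neg_mul hT0 hTT).sub
      (hx.isFP3Control.intervalIntegrable_neg_mul hT0 hTT)
  have hibp := integral_exp_mul_eq (lam := lam) hg
  have hI : ∫ t in t0..T, exp (-(lam * t)) * ∫ s in t0..t, (-(a * v s) - -(a * u s)) =
      ∫ t in t0..T, exp (-(lam * t)) * (y t - x t) :=
    intervalIntegral.integral_congr fun t ht => by rw [hprim t ht]
  have hK : ∫ t in t0..T, exp (-(lam * t)) * (-(a * v t) - -(a * u t)) =
      -a * ((∫ t in t0..T, exp (-(lam * t)) * v t) - ∫ t in t0..T, exp (-(lam * t)) * u t) := by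
    rw [← intervalIntegral.integral_sub (hy.intervalIntegrable_exp_mul_control htT)
      (hx.intervalIntegrable_exp_mul_control htT), ← intervalIntegral.integral_const_mul]
    exact intervalIntegral.integral_congr fun t _ => by ring
  have hD : ∫ t in t0..T, exp (-(lam * t)) * (y t - x t) =
      (∫ t in t0..T, exp (-(lam * t)) * y t) - ∫ t in t0..T, exp (-(lam * t)) * x t := by
    rw [← intervalIntegral.integral_sub (hy.intervalIntegrable_exp_mul_state htT)
      (hx.intervalIntegrable_exp_mul_state htT)]
    exact intervalIntegral.integral_congr fun t _ => by ring
  rw [hI, hprim T right_mem_uIcc, hK, hD] at hibp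
  rw [hx.cost_eq htT, hy.cost_eq htT, hD]
  field_simp
  linear_combination hibp

theorem cost_lt_of_le (ha : 0 < a) (hal : lam < a) (hx : FP3Feasible a t0 T x0 x u)
    (hy : FP3Feasible a t0 T x0 y v) (hle : ∀ t ∈ Icc t0 T, x t ≤ y t) (hT : y T = x T) {s : ℝ}
    (hs : s ∈ Icc t0 T) (hlt : x s < y s) :
    FP3Cost lam t0 T y v < FP3Cost lam t0 T x u := by
  have hsT : s < T := lt_of_le_of_ne hs.2 (by rintro rfl; exact hlt.ne' hT)
  have htT : t0 < T := hs.1.trans_lt hsT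
  have hpos : 0 < ∫ t in t0..T, exp (-(lam * t)) * (y t - x t) :=
    intervalIntegral.integral_pos htT
      ((by fun_prop : Continuous fun t => exp (-(lam * t))).continuousOn.mul
        (hy.continuousOn.sub hx.continuousOn))
      (fun t ht => mul_nonneg (exp_pos _).le (sub_nonneg.2 (hle t (Ioc_subset_Icc_self ht))))
      ⟨s, hs, mul_pos (exp_pos _) (sub_pos.2 hlt)⟩
  have hcoef : 0 < 1 - lam / a := by rwa [sub_pos, div_lt_one ha]
  have hdiff := cost_sub_eq (lam := lam) ha.ne' htT.le hx hy
  rw [hT, sub_self, mul_zero, zero_div, add_zero] at hdiff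
  nlinarith [mul_pos hcoef hpos]

end FP3Feasible

-- Since `ẋ = -a u`, the value `-1` drives the state up at full speed and `+1` down.
def switchControl (r t : ℝ) : ℝ := if t ≤ r then -1 else 1

lemma monotone_switchControl (r : ℝ) : Monotone (switchControl r) := by
  intro s t hst
  unfold switchControl
  split_ifs with hs ht ht
  · exact le_rfl
  · norm_num
  · exact absurd (hst.trans ht) hs
  · exact le_rfl

lemma isFP3Control_switchControl (t0 T r : ℝ) : IsFP3Control t0 T (switchControl r) :=
  ⟨(monotone_switchControl r).measurable.aestronglyMeasurable,
    ae_of_all _ fun t => by unfold switchControl; split_ifs <;> norm_num⟩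

lemma integral_switchControl {a σ r t : ℝ} (hσr : σ ≤ r) (hσt : σ ≤ t) :
    ∫ s in σ..t, -(a * switchControl r s) = a * (min t r - σ) - a * (max t r - r) := by
  have hint (p q : ℝ) : IntervalIntegrable (fun s => -(a * switchControl r s)) volume p q :=
    ((monotone_switchControl r).intervalIntegrable.const_mul a).neg
  have hup : ∫ s in σ..min t r, -(a * switchControl r s) = a * (min t r - σ) := by
    rw [intervalIntegral.integral_congr_Ioo_of_le (le_min hσt hσr) (g := fun _ => a)
      fun s hs => ?_]
    · rw [intervalIntegral.integral_const, smul_eq_mul, mul_comm]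
    · simp [switchControl, hs.2.le.trans (min_le_right t r)]
  have hdown : ∫ s in min t r..t, -(a * switchControl r s) = -(a * (t - min t r)) := by
    rw [intervalIntegral.integral_congr_Ioo_of_le (min_le_left t r) (g := fun _ => -a)
      fun s hs => ?_]
    · simp [mul_comm]
    · have hrs : r < s := (min_lt_iff.1 hs.1).resolve_left (not_lt.2 hs.2.le)
      simp [switchControl, not_le.2 hrs]
  rw [← intervalIntegral.integral_add_adjacent_intervals (hint σ (min t r)) (hint (min t r) t),
    hup, hdown, show max t r = t + r - min t r by linarith [min_add_max t r] ]
  ring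

lemma add_integral_switchControl {a σ1 σ2 c1 c2 r t : ℝ} (ha : 0 ≤ a)
    (hr : 2 * a * r = c2 - c1 + a * (σ1 + σ2)) (hσr : σ1 ≤ r) (ht : σ1 ≤ t) :
    c1 + ∫ s in σ1..t, -(a * switchControl r s) = min (c1 + a * (t - σ1)) (c2 + a * (σ2 - t)) := by
  rw [integral_switchControl hσr ht]
  rcases le_total t r with htr | hrt
  · rw [min_eq_left htr, max_eq_right htr, min_eq_left (by nlinarith)]
    ring
  · rw [min_eq_right hrt, max_eq_left hrt, min_eq_right (by nlinarith)]
    linear_combination hr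

section Splice

variable {a t0 T x0 σ1 σ2 t : ℝ} {u w : ℝ → ℝ}

lemma IsFP3Control.piecewise (hw : IsFP3Control t0 T w) (hu : IsFP3Control t0 T u) :
    IsFP3Control t0 T ((Ioc σ1 σ2).piecewise w u) := by
  refine ⟨hw.1.restrict.piecewise measurableSet_Ioc hu.1.restrict, ?_⟩
  filter_upwards [hw.2, hu.2] with t hwt hut
  by_cases ht : t ∈ Ioc σ1 σ2 <;> simp [Set.piecewise, ht, hwt, hut]

lemma integral_abs_piecewise_sub_le (hw : IsFP3Control t0 T w) (hu : IsFP3Control t0 T u)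
    (h1 : t0 ≤ σ1) (h12 : σ1 ≤ σ2) (h2 : σ2 ≤ T) :
    ∫ t in t0..T, |-(a * (Ioc σ1 σ2).piecewise w u t) - -(a * u t)| ≤ 2 * |a| * (σ2 - σ1) := by
  have hind : (fun t => |-(a * (Ioc σ1 σ2).piecewise w u t) - -(a * u t)|) =
      (Ioc σ1 σ2).indicator fun t => |-(a * w t) - -(a * u t)| := by
    funext t
    by_cases ht : t ∈ Ioc σ1 σ2 <;> simp [Set.piecewise, ht]
  have hσ1 : σ1 ∈ Icc t0 T := ⟨h1, h12.trans h2⟩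
  have hσ2 : σ2 ∈ Icc t0 T := ⟨h1.trans h12, h2⟩
  rw [hind, intervalIntegral.integral_of_le (h1.trans (h12.trans h2)),
    setIntegral_indicator measurableSet_Ioc, inter_eq_right.2 (Ioc_subset_Ioc h1 h2),
    ← intervalIntegral.integral_of_le h12, ← abs_of_nonneg (sub_nonneg.2 h12)]
  refine (le_abs_self _).trans
    (intervalIntegral.norm_integral_le_of_norm_le_const_ae
      (f := fun t => |-(a * w t) - -(a * u t)|) ?_)
  filter_upwards [hw.ae_abs_le hσ1 hσ2, hu.ae_abs_le hσ1 hσ2] with t hwt hut hmem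
  rw [Real.norm_eq_abs, abs_abs, show -(a * w t) - -(a * u t) = a * (u t - w t) by ring, abs_mul,
    mul_comm 2]
  exact mul_le_mul_of_nonneg_left ((abs_sub _ _).trans (by linarith [hwt hmem, hut hmem]))
    (abs_nonneg a)

lemma fp3Trajectory_piecewise_of_le (ht0 : t0 ≤ t) (ht : t ≤ σ1) :
    fp3Trajectory a t0 x0 ((Ioc σ1 σ2).piecewise w u) t = fp3Trajectory a t0 x0 u t := by
  unfold fp3Trajectory
  congr 1
  refine intervalIntegral.integral_congr_Ioo_of_le ht0 fun s hs => ?_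
  simp [Set.piecewise, show s ∉ Ioc σ1 σ2 from fun h => (hs.2.trans_le ht).not_gt h.1]

lemma fp3Trajectory_piecewise_of_mem (hw : IsFP3Control t0 T w) (hu : IsFP3Control t0 T u)
    (h1 : t0 ≤ σ1) (h2 : σ2 ≤ T) (ht : t ∈ Icc σ1 σ2) :
    fp3Trajectory a t0 x0 ((Ioc σ1 σ2).piecewise w u) t =
      fp3Trajectory a t0 x0 u σ1 + ∫ s in σ1..t, -(a * w s) := by
  rw [← fp3Trajectory_piecewise_of_le (σ2 := σ2) (w := w) h1 le_rfl, ← sub_eq_iff_eq_add',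
    (hw.piecewise hu).fp3Trajectory_sub ⟨h1, ht.1.trans (ht.2.trans h2)⟩
      ⟨h1.trans ht.1, ht.2.trans h2⟩]
  refine intervalIntegral.integral_congr_Ioo_of_le ht.1 fun s hs => ?_
  simp [Set.piecewise, hs.1, hs.2.le.trans ht.2]

lemma fp3Trajectory_piecewise_sub_of_ge (hw : IsFP3Control t0 T w) (hu : IsFP3Control t0 T u)
    (h2 : t0 ≤ σ2) (ht : t ∈ Icc σ2 T) :
    fp3Trajectory a t0 x0 ((Ioc σ1 σ2).piecewise w u) t - fp3Trajectory a t0 x0 u t =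
      fp3Trajectory a t0 x0 ((Ioc σ1 σ2).piecewise w u) σ2 - fp3Trajectory a t0 x0 u σ2 := by
  have hσ2 : σ2 ∈ Icc t0 T := ⟨h2, ht.1.trans ht.2⟩
  have ht' : t ∈ Icc t0 T := ⟨h2.trans ht.1, ht.2⟩
  have hsame : fp3Trajectory a t0 x0 ((Ioc σ1 σ2).piecewise w u) t -
      fp3Trajectory a t0 x0 ((Ioc σ1 σ2).piecewise w u) σ2 =
      fp3Trajectory a t0 x0 u t - fp3Trajectory a t0 x0 u σ2 := by
    rw [(hw.piecewise hu).fp3Trajectory_sub hσ2 ht', hu.fp3Trajectory_sub hσ2 ht']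
    refine intervalIntegral.integral_congr_Ioo_of_le ht.1 fun s hs => ?_
    simp [Set.piecewise, show s ∉ Ioc σ1 σ2 from fun h => (h.2.trans_lt hs.1).false]
  linarith

end Splice

namespace FP3Feasible

variable {a t0 T x0 σ1 σ2 r t : ℝ} {x u w : ℝ → ℝ}

lemma fp3Trajectory_piecewise_eq (hf : FP3Feasible a t0 T x0 x u) (hw : IsFP3Control t0 T w)
    (h2 : t0 ≤ σ2) (hrejoin : fp3Trajectory a t0 x0 ((Ioc σ1 σ2).piecewise w u) σ2 = x σ2)
    (ht : t ∈ Icc t0 T) (hout : t ∉ Ioo σ1 σ2) :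
    fp3Trajectory a t0 x0 ((Ioc σ1 σ2).piecewise w u) t = x t := by
  rcases le_or_gt t σ1 with h1 | h1
  · exact (fp3Trajectory_piecewise_of_le ht.1 h1).trans (hf.eqOn_fp3Trajectory ht).symm
  · have hσ2t : σ2 ≤ t := not_lt.1 fun h => hout ⟨h1, h⟩
    have hshift := fp3Trajectory_piecewise_sub_of_ge (a := a) (x0 := x0) (σ1 := σ1) hw
      hf.isFP3Control h2 ⟨hσ2t, ht.2⟩
    rw [← hf.eqOn_fp3Trajectory ht, ← hf.eqOn_fp3Trajectory ⟨h2, hσ2t.trans ht.2⟩, hrejoin,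
      sub_self, sub_eq_zero] at hshift
    exact hshift

lemma fp3Trajectory_piecewise_switchControl (ha : 0 ≤ a) (hf : FP3Feasible a t0 T x0 x u)
    (h1 : t0 ≤ σ1) (h2 : σ2 ≤ T) (hr : 2 * a * r = x σ2 - x σ1 + a * (σ1 + σ2)) (hσr : σ1 ≤ r)
    (ht : t ∈ Icc σ1 σ2) :
    fp3Trajectory a t0 x0 ((Ioc σ1 σ2).piecewise (switchControl r) u) t =
      min (x σ1 + a * (t - σ1)) (x σ2 + a * (σ2 - t)) := by
  rw [← add_integral_switchControl ha hr hσr ht.1,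
    hf.eqOn_fp3Trajectory ⟨h1, ht.1.trans (ht.2.trans h2)⟩]
  exact fp3Trajectory_piecewise_of_mem (isFP3Control_switchControl t0 T r) hf.isFP3Control h1 h2 ht

theorem exists_lift_near_min (ha : 0 < a) (hf : FP3Feasible a t0 T x0 x u) {s h : ℝ}
    (hh : 0 < h) (hl : t0 ≤ s - h) (hr : s + h ≤ T) (hminl : x s ≤ x (s - h))
    (hminr : x s ≤ x (s + h)) (hroom : x s + 2 * a * h ≤ 1) :
    ∃ y v, FP3Feasible a t0 T x0 y v ∧ ∫ t in t0..T, |-(a * v t) - -(a * u t)| ≤ 4 * a * h ∧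
      (∀ t ∈ Icc t0 T, x t ≤ y t) ∧ y T = x T ∧ x s < y s := by
  have hσ1 : s - h ∈ Icc t0 T := ⟨hl, by linarith⟩
  have hσ2 : s + h ∈ Icc t0 T := ⟨by linarith, hr⟩
  have hs : s ∈ Icc t0 T := ⟨by linarith, by linarith⟩
  have h1s := hf.le_add_mul_sub ha.le hσ1 hs (by linarith)
  have hs2 := hf.le_add_mul_sub ha.le hs hσ2 (by linarith)
  have h12 := hf.le_add_mul_sub ha.le hσ1 hσ2 (by linarith)
  -- the time at which the full-speed ascent from `x (s - h)` meets the full-speed descent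
  -- into `x (s + h)`
  set r := s + (x (s + h) - x (s - h)) / (2 * a) with hr_def
  have hr_eq : 2 * a * r = x (s + h) - x (s - h) + a * ((s - h) + (s + h)) := by
    rw [hr_def]; field_simp; ring
  have hr1 : s - h ≤ r := le_of_mul_le_mul_left (by linarith) (by linarith : 0 < 2 * a)
  have hsw := isFP3Control_switchControl t0 T r
  set v := (Ioc (s - h) (s + h)).piecewise (switchControl r) u
  set y := fp3Trajectory a t0 x0 v
  have htent (t : ℝ) (ht : t ∈ Icc (s - h) (s + h)) :
      y t = min (x (s - h) + a * (t - (s - h))) (x (s + h) + a * ((s + h) - t)) :=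
    hf.fp3Trajectory_piecewise_switchControl ha.le hl hr hr_eq hr1 ht
  have hout (t : ℝ) (ht : t ∈ Icc t0 T) (hn : t ∉ Ioo (s - h) (s + h)) : y t = x t := by
    refine hf.fp3Trajectory_piecewise_eq hsw hσ2.1 ((htent _ ⟨by linarith, le_rfl⟩).trans ?_) ht hn
    rw [min_eq_right (by linarith)]
    ring
  have hle (t : ℝ) (ht : t ∈ Icc t0 T) : x t ≤ y t := by
    by_cases hin : t ∈ Ioo (s - h) (s + h)
    · rw [htent t (Ioo_subset_Icc_self hin)]
      exact le_min (hf.le_add_mul_sub ha.le hσ1 ht hin.1.le).1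
        (hf.le_add_mul_sub ha.le ht hσ2 hin.2.le).2
    · exact (hout t ht hin).ge
  have hup (t : ℝ) (ht : t ∈ Icc t0 T) : y t ≤ 1 := by
    by_cases hin : t ∈ Ioo (s - h) (s + h)
    · rw [htent t (Ioo_subset_Icc_self hin)]
      linarith [min_le_left (x (s - h) + a * (t - (s - h))) (x (s + h) + a * ((s + h) - t)),
        min_le_right (x (s - h) + a * (t - (s - h))) (x (s + h) + a * ((s + h) - t))]
    · exact (hout t ht hin).trans_le (hf.mem_Icc ht).2
  refine ⟨y, v, (hsw.piecewise hf.isFP3Control).fp3Feasible fun t ht =>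
      ⟨(hf.mem_Icc ht).1.trans (hle t ht), hup t ht⟩,
    ?_, hle, hout T (right_mem_Icc.2 (hl.trans (by linarith))) fun hT => ?_, ?_⟩
  · have := integral_abs_piecewise_sub_le (a := a) hsw hf.isFP3Control hl (by linarith) hr
    rw [abs_of_pos ha] at this
    linarith
  · linarith [hT.2]
  · rw [htent s ⟨by linarith, by linarith⟩]
    exact lt_min (by nlinarith) (by nlinarith)

end FP3Feasible

theorem fp3_statement_S4_general
    (a lam t0 T x0 : ℝ) (hal : lam < a) (hlam : 0 < lam)
    (xb ub : ℝ → ℝ) (hmin : FP3LocalMin a lam t0 T x0 xb ub) :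
    ¬ ∃ τ1 τ2 : ℝ, t0 ≤ τ1 ∧ τ1 < τ2 ∧ τ2 ≤ T ∧
      (∀ t ∈ Ioo τ1 τ2, xb t ∈ Ioo (-1 : ℝ) 1) ∧ xb τ1 = 1 ∧ xb τ2 = 1 := by
  rintro ⟨τ1, τ2, hτ1, hτ12, hτ2, hinterior, hx1, hx2⟩
  obtain ⟨hf, δ, hδ, hloc⟩ := hmin
  have ha : 0 < a := hlam.trans hal
  have hsub : Icc τ1 τ2 ⊆ Icc t0 T := Icc_subset_Icc hτ1 hτ2
  obtain ⟨s, hs, hsmin⟩ :=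
    isCompact_Icc.exists_isMinOn (nonempty_Icc.2 hτ12.le) (hf.continuousOn.mono hsub)
  have hmid : (τ1 + τ2) / 2 ∈ Ioo τ1 τ2 := ⟨by linarith, by linarith⟩
  have hm : xb s < 1 := (hsmin (Ioo_subset_Icc_self hmid)).trans_lt (hinterior _ hmid).2
  have hs1 : τ1 < s := lt_of_le_of_ne hs.1 (by rintro rfl; linarith)
  have hs2 : s < τ2 := lt_of_le_of_ne hs.2 (by rintro rfl; linarith)
  obtain ⟨h, hh, hh1, hh2, hh3, hh4⟩ : ∃ h > 0, h ≤ s - τ1 ∧ h ≤ τ2 - s ∧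
      h ≤ (1 - xb s) / (2 * a) ∧ h ≤ δ / (4 * a) :=
    ⟨min (min (s - τ1) (τ2 - s)) (min ((1 - xb s) / (2 * a)) (δ / (4 * a))),
      lt_min (lt_min (by linarith) (by linarith))
        (lt_min (div_pos (by linarith) (by linarith)) (div_pos hδ (by linarith))),
      inf_le_left.trans inf_le_left, inf_le_left.trans inf_le_right,
      inf_le_right.trans inf_le_left, inf_le_right.trans inf_le_right⟩
  rw [le_div_iff₀ (by linarith)] at hh3 hh4
  obtain ⟨y, v, hy, hdist, hle, hT, hlt⟩ := hf.exists_lift_near_min ha hh (by linarith)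
    (by linarith) (hsmin ⟨by linarith, by linarith⟩) (hsmin ⟨by linarith, by linarith⟩)
    (by linarith)
  exact (hf.cost_lt_of_le ha hal hy hle hT (hsub hs) hlt).not_ge
    (hloc y v hy (by linarith))

/-- for a local minimizer, there is no subsegment `[τ1,τ2]` of
`[t0,T]` with the trajectory in `(-1,1)` on `(τ1,τ2)` and equal to `1` at both
endpoints. -/
theorem fp3_statement_S4
    (a lam t0 T x0 : ℝ) (hal : lam < a) (hlam : 0 < lam)
    (ht0 : 0 ≤ t0) (htT : t0 < T) (hx0 : x0 ∈ Icc (-1 : ℝ) 1)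
    (xb ub : ℝ → ℝ) (hmin : FP3LocalMin a lam t0 T x0 xb ub) :
    ¬ ∃ τ1 τ2 : ℝ, t0 ≤ τ1 ∧ τ1 < τ2 ∧ τ2 ≤ T ∧
      (∀ t ∈ Ioo τ1 τ2, xb t ∈ Ioo (-1 : ℝ) 1) ∧ xb τ1 = 1 ∧ xb τ2 = 1 :=
  fp3_statement_S4_general a lam t0 T x0 hal hlam xb ub hmin
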